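/- Let Q ∈ ℝ^{m×m} be symmetric positive definite and let B ∈ ℝ^{m×n} have full column rank (rank B = n). Consider the real (n+m)×(n+m) block matrix J = [[0, −Bᵀ], [B, −Q]]. Then every complex eigenvalue λ of J satisfies Re(λ) < 0. More precisely: if Im(λ) = 0 then Re(λ) ≤ −λ_min(Q)·λ_min(BᵀB) / (λ_max(Q)·λ_min(Q) + λ_min(BᵀB)), and if Im(λ) ≠ 0 then Re(λ) ≤ −λ_min(Q)/2, where λ_min and λ_max denote the smallest and largest eigenvalues of the respective symmetric positive (semi)definite matrices. -/

import Mathlib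

/-!
If `(u, v)` is an eigenvector of `J = [[0, -Bᴴ], [B, -Q]]` for the eigenvalue `λ`, the block
equations `-Bᴴ v = λ u` and `B u - Q v = λ v` give two expressions for `⟪v, B u⟫`, whence
`λ ‖v‖² + conj λ ‖u‖² + ⟪v, Q v⟫ = 0`. The real part reads
`Re λ (‖u‖² + ‖v‖²) = -⟪v, Q v⟫ < 0`, as `v ≠ 0` by injectivity of `B`; when `Im λ ≠ 0` the
imaginary part forces `‖u‖ = ‖v‖`, so `2 Re λ ‖v‖² ≤ -λ_min(Q) ‖v‖²`.
When `λ` is real, expanding `‖B u‖² = ‖λ v + Q v‖²` and using `λ_min(BᴴB) ‖u‖² ≤ ‖B u‖²`,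
`‖Q v‖² ≤ λ_max(Q) ⟪v, Q v⟫` and `λ_min(Q) ‖v‖² ≤ ⟪v, Q v⟫` yields the sharper real bound.
-/

open Matrix

lemma Matrix.exists_mulVec_eq_smul_of_mem_spectrum {K k : Type*} [Field K] [Fintype k]
    [DecidableEq k] {M : Matrix k k K} {μ : K} (h : μ ∈ spectrum K M) :
    ∃ x ≠ 0, M *ᵥ x = μ • x := by
  rw [← spectrum_toLin', ← Module.End.hasEigenvalue_iff_mem_spectrum] at h
  obtain ⟨x, hx⟩ := h.exists_hasEigenvector
  exact ⟨x, hx.2, by simpa using hx.apply_eq_smul⟩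

lemma Matrix.fromBlocks_mulVec_sumElim_eq_smul_iff {R l o : Type*} [NonUnitalNonAssocSemiring R]
    [Fintype l] [Fintype o] {A : Matrix l l R} {B : Matrix l o R} {C : Matrix o l R} {D : Matrix o o R}
    {u : l → R} {v : o → R} {μ : R} :
    fromBlocks A B C D *ᵥ Sum.elim u v = μ • Sum.elim u v ↔
      A *ᵥ u + B *ᵥ v = μ • u ∧ C *ᵥ u + D *ᵥ v = μ • v := by
  simp only [fromBlocks_mulVec, funext_iff, Sum.forall, Sum.elim_inl, Sum.elim_inr,
    Pi.smul_apply, Function.comp_def]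

lemma Matrix.mulVec_injective_of_rank_eq_card {K m n : Type*} [Field K] [Fintype n]
    {B : Matrix m n K} (hB : B.rank = Fintype.card n) : Function.Injective B.mulVec :=
  mulVec_injective_iff.mpr <| linearIndependent_iff_card_eq_finrank_span.mpr <| by
    rw [Set.finrank, ← rank_eq_finrank_span_cols, hB]

lemma Matrix.spectrum_map_ofReal_subset {k : Type*} [Fintype k] [DecidableEq k]
    (M : Matrix k k ℝ) : spectrum ℝ (M.map Complex.ofReal) ⊆ spectrum ℝ M :=
  AlgHom.spectrum_apply_subset (Algebra.ofId ℝ ℂ).mapMatrix M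

section HermitianForm

open scoped ComplexOrder MatrixOrder

variable {𝕜 k : Type*} [RCLike 𝕜] [Fintype k] [DecidableEq k] {A : Matrix k k 𝕜}

lemma Matrix.PosDef.pos_of_mem_spectrum (hA : A.PosDef) {μ : ℝ} (hμ : μ ∈ spectrum ℝ A) :
    0 < μ := by
  rw [hA.isHermitian.spectrum_real_eq_range_eigenvalues] at hμ
  obtain ⟨i, rfl⟩ := hμ
  exact hA.eigenvalues_pos i

lemma Matrix.IsHermitian.mul_re_dotProduct_self_le_of_le_spectrum (hA : A.IsHermitian) {c : ℝ}
    (hc : ∀ μ ∈ spectrum ℝ A, c ≤ μ) (v : k → 𝕜) :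
    c * RCLike.re (star v ⬝ᵥ v) ≤ RCLike.re (star v ⬝ᵥ (A *ᵥ v)) := by
  have hpsd : (A - algebraMap ℝ _ c).PosSemidef :=
    (algebraMap_le_iff_le_spectrum hA.isSelfAdjoint).mpr hc
  have := hpsd.re_dotProduct_nonneg v
  rw [Algebra.algebraMap_eq_smul_one, sub_mulVec, smul_mulVec, one_mulVec, dotProduct_sub,
    dotProduct_smul, map_sub, RCLike.smul_re] at this
  linarith

lemma Matrix.IsHermitian.re_dotProduct_mulVec_self_le_of_spectrum_le (hA : A.IsHermitian)
    {c : ℝ} (h0 : ∀ μ ∈ spectrum ℝ A, 0 ≤ μ) (hc : ∀ μ ∈ spectrum ℝ A, μ ≤ c) (v : k → 𝕜) :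
    RCLike.re (star (A *ᵥ v) ⬝ᵥ (A *ᵥ v)) ≤ c * RCLike.re (star v ⬝ᵥ (A *ᵥ v)) := by
  have hpsd : (c • A - A * A).PosSemidef := by
    have hcfc : c • A - A * A = cfc (fun x : ℝ => c * x - x ^ 2) A := by
      rw [cfc_sub .., cfc_const_mul .., cfc_pow .., cfc_id' ..]
      noncomm_ring
    rw [← nonneg_iff_posSemidef, hcfc]
    exact cfc_nonneg fun x hx => by nlinarith [h0 x hx, hc x hx]
  have := hpsd.re_dotProduct_nonneg v
  rw [sub_mulVec, smul_mulVec, ← mulVec_mulVec, dotProduct_sub, dotProduct_smul, map_sub,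
    RCLike.smul_re] at this
  rw [star_mulVec, hA.eq, ← dotProduct_mulVec]
  linarith

end HermitianForm

lemma RCLike.re_star_dotProduct_smul_add_self {𝕜 k : Type*} [RCLike 𝕜] [Fintype k] (a : ℝ)
    (v w : k → 𝕜) :
    re (star (a • v + w) ⬝ᵥ (a • v + w)) =
      a ^ 2 * re (star v ⬝ᵥ v) + 2 * a * re (star v ⬝ᵥ w) + re (star w ⬝ᵥ w) := by
  have hwv : re (star w ⬝ᵥ v) = re (star v ⬝ᵥ w) := by
    rw [star_dotProduct, RCLike.star_def, RCLike.conj_re]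
  simp only [star_add, star_smul, star_trivial, add_dotProduct, dotProduct_add, smul_dotProduct,
    dotProduct_smul, map_add, RCLike.smul_re, hwv]
  ring

section StarDotProductSelf

open scoped ComplexOrder

variable {k : Type*} [Fintype k]

lemma Complex.re_star_dotProduct_self_nonneg (v : k → ℂ) : 0 ≤ (star v ⬝ᵥ v).re :=
  (Complex.nonneg_iff.mp (dotProduct_star_self_nonneg v)).1

lemma Complex.im_star_dotProduct_self (v : k → ℂ) : (star v ⬝ᵥ v).im = 0 :=
  (Complex.nonneg_iff.mp (dotProduct_star_self_nonneg v)).2.symm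

lemma Complex.re_star_dotProduct_self_pos {v : k → ℂ} (hv : v ≠ 0) : 0 < (star v ⬝ᵥ v).re :=
  (Complex.pos_iff.mp (dotProduct_star_self_pos_iff.mpr hv)).1

end StarDotProductSelf

/-- Compute `⟪v, B u⟫` through each of the two block equations. -/
lemma Matrix.energy_identity_of_fromBlocks_eigen {R m n : Type*} [CommRing R] [StarRing R]
    [Fintype m] [Fintype n] {Q : Matrix m m R} {B : Matrix m n R} {u : n → R} {v : m → R}
    {lam : R} (hu : -(Bᴴ *ᵥ v) = lam • u) (hv : B *ᵥ u - Q *ᵥ v = lam • v) :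
    lam * (star v ⬝ᵥ v) + star lam * (star u ⬝ᵥ u) + star v ⬝ᵥ (Q *ᵥ v) = 0 := by
  have hBu : star v ⬝ᵥ (B *ᵥ u) = -(star lam * (star u ⬝ᵥ u)) := by
    rw [dotProduct_mulVec, ← conjTranspose_conjTranspose B, ← star_mulVec, ← neg_neg (Bᴴ *ᵥ v),
      hu, star_neg, star_smul, neg_dotProduct, smul_dotProduct, smul_eq_mul]
  rw [eq_add_of_sub_eq hv, dotProduct_add, dotProduct_smul, smul_eq_mul] at hBu
  linear_combination hBu

/-- `a = λ`, `P = ‖u‖²`, `N = ‖v‖²`, `R = ⟪v, Q v⟫`, `S = ‖B u‖²`, `W = ‖Q v‖²`. -/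
lemma real_eigenvalue_bound {a P N R S W qmin qmax bmin : ℝ} (hqmin : 0 < qmin)
    (hbmin : 0 < bmin) (hP : 0 ≤ P) (hN : 0 < N) (hR : qmin * N ≤ R) (hS : bmin * P ≤ S)
    (hW : W ≤ qmax * R) (hbal : a * (N + P) + R = 0) (hSexp : S = a ^ 2 * N + 2 * a * R + W) :
    a ≤ -(qmin * bmin) / (qmax * qmin + bmin) := by
  have ha : a < 0 := by nlinarith
  have hSR : bmin * P ≤ qmax * R := by nlinarith
  have hkey : qmin * bmin * (N + P) ≤ -a * (qmax * qmin + bmin) * (N + P) :=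
    calc qmin * bmin * (N + P) = bmin * (qmin * N) + qmin * (bmin * P) := by ring
      _ ≤ bmin * R + qmin * (qmax * R) := by gcongr
      _ = -a * (qmax * qmin + bmin) * (N + P) := by linear_combination (qmax * qmin + bmin) * hbal
  have hD : qmin * bmin ≤ -a * (qmax * qmin + bmin) :=
    le_of_mul_le_mul_right hkey (by linarith)
  have hDpos : 0 < qmax * qmin + bmin := by nlinarith
  rw [neg_div, le_neg, div_le_iff₀ hDpos]
  linarith

theorem Matrix.re_bounds_of_mem_spectrum_fromBlocks {m n : Type*} [Fintype m] [Fintype n]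
    [DecidableEq m] [DecidableEq n] {Q : Matrix m m ℂ} {B : Matrix m n ℂ} (hQ : Q.IsHermitian)
    {qmin qmax bmin : ℝ} (hqmin0 : 0 < qmin) (hbmin0 : 0 < bmin)
    (hqmin : ∀ μ ∈ spectrum ℝ Q, qmin ≤ μ) (hqmax : ∀ μ ∈ spectrum ℝ Q, μ ≤ qmax)
    (hbmin : ∀ μ ∈ spectrum ℝ (Bᴴ * B), bmin ≤ μ) {lam : ℂ}
    (hlam : lam ∈ spectrum ℂ (fromBlocks 0 (-Bᴴ) B (-Q))) :
    lam.re < 0 ∧ (lam.im = 0 → lam.re ≤ -(qmin * bmin) / (qmax * qmin + bmin)) ∧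
      (lam.im ≠ 0 → lam.re ≤ -(qmin / 2)) := by
  obtain ⟨x, hx0, hx⟩ := exists_mulVec_eq_smul_of_mem_spectrum hlam
  obtain ⟨u, v, rfl⟩ : ∃ u v, x = Sum.elim u v := ⟨_, _, (Sum.elim_comp_inl_inr x).symm⟩
  obtain ⟨hu, hv⟩ := fromBlocks_mulVec_sumElim_eq_smul_iff.mp hx
  simp only [zero_mulVec, zero_sub, neg_mulVec, ← sub_eq_add_neg] at hu hv
  have hR : qmin * (star v ⬝ᵥ v).re ≤ (star v ⬝ᵥ (Q *ᵥ v)).re :=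
    hQ.mul_re_dotProduct_self_le_of_le_spectrum hqmin v
  have hS : bmin * (star u ⬝ᵥ u).re ≤ (star (B *ᵥ u) ⬝ᵥ (B *ᵥ u)).re := by
    have := (isHermitian_conjTranspose_mul_self B).mul_re_dotProduct_self_le_of_le_spectrum hbmin u
    rwa [← mulVec_mulVec, dotProduct_mulVec, ← star_mulVec] at this
  have hv0 : v ≠ 0 := by
    rintro rfl
    have hu0 : u ≠ 0 := by rintro rfl; exact hx0 Sum.elim_zero_zero
    simp only [mulVec_zero, sub_zero, smul_zero] at hv
    simp only [hv, star_zero, dotProduct_zero, Complex.zero_re] at hS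
    nlinarith [Complex.re_star_dotProduct_self_pos hu0]
  have henergy := energy_identity_of_fromBlocks_eigen hu hv
  have hre := congrArg Complex.re henergy
  have him := congrArg Complex.im henergy
  have hRim : (star v ⬝ᵥ (Q *ᵥ v)).im = 0 := hQ.im_star_dotProduct_mulVec_self v
  simp only [Complex.add_re, Complex.add_im, Complex.mul_re, Complex.mul_im, hRim,
    Complex.im_star_dotProduct_self, Complex.star_def, Complex.conj_re, Complex.conj_im,
    Complex.zero_re, Complex.zero_im, mul_zero, sub_zero, add_zero, zero_add, neg_mul] at hre him
  have hN := Complex.re_star_dotProduct_self_pos hv0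
  have hP := Complex.re_star_dotProduct_self_nonneg u
  refine ⟨by nlinarith, fun hreal => ?_, fun hcplx => ?_⟩
  · have hBu : B *ᵥ u = lam.re • v + Q *ᵥ v := by
      rw [eq_add_of_sub_eq hv, ← Complex.coe_smul, ← Complex.re_add_im lam]
      simp [hreal]
    have hW := hQ.re_dotProduct_mulVec_self_le_of_spectrum_le
      (fun μ hμ => hqmin0.le.trans (hqmin μ hμ)) hqmax v
    refine real_eigenvalue_bound hqmin0 hbmin0 hP hN hR hS hW (by linarith) ?_
    rw [hBu]
    exact RCLike.re_star_dotProduct_smul_add_self lam.re v (Q *ᵥ v)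
  · have hPN : (star u ⬝ᵥ u).re = (star v ⬝ᵥ v).re :=
      (mul_left_cancel₀ hcplx (by linarith)).symm
    nlinarith

theorem gan_jacobian_eigenvalue_bounds
    {n m : ℕ} (Q : Matrix (Fin m) (Fin m) ℝ) (B : Matrix (Fin m) (Fin n) ℝ)
    (hQpd : Q.PosDef) (hB : B.rank = n)
    (J : Matrix (Fin n ⊕ Fin m) (Fin n ⊕ Fin m) ℝ)
    (hJ : J = Matrix.fromBlocks 0 (-Bᵀ) B (-Q))
    (qmin qmax bmin : ℝ)
    (hqmin : IsLeast (spectrum ℝ Q) qmin)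
    (hqmax : IsGreatest (spectrum ℝ Q) qmax)
    (hbmin : IsLeast (spectrum ℝ (Bᵀ * B)) bmin) :
    ∀ lam ∈ spectrum ℂ (J.map Complex.ofReal),
      lam.re < 0 ∧
      (lam.im = 0 → lam.re ≤ -(qmin * bmin) / (qmax * qmin + bmin)) ∧
      (lam.im ≠ 0 → lam.re ≤ -(qmin / 2)) := by
  intro lam hlam
  set Bc := B.map Complex.ofReal
  set Qc := Q.map Complex.ofReal
  have hconj : Function.Semiconj Complex.ofReal star star := fun x => (Complex.conj_ofReal x).symm
  have hBB : (Bᵀ * B).PosDef := by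
    have hBinj := mulVec_injective_of_rank_eq_card (B := B) (by simpa using hB)
    simpa using PosDef.conjTranspose_mul_self B hBinj
  have hBBc : Bcᴴ * Bc = (Bᵀ * B).map Complex.ofReal := by
    ext i j
    simp [Bc, Matrix.mul_apply]
  have hJc : J.map Complex.ofReal = fromBlocks 0 (-Bcᴴ) Bc (-Qc) := by
    rw [hJ, fromBlocks_map, ← conjTranspose_eq_transpose_of_trivial,
      Matrix.map_neg _ Complex.ofReal_neg, Matrix.map_neg _ Complex.ofReal_neg,
      conjTranspose_map _ hconj, Matrix.map_zero _ Complex.ofReal_zero]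
  exact re_bounds_of_mem_spectrum_fromBlocks (hQpd.isHermitian.map _ hconj)
    (hQpd.pos_of_mem_spectrum hqmin.1) (hBB.pos_of_mem_spectrum hbmin.1)
    (fun μ hμ => hqmin.2 (spectrum_map_ofReal_subset Q hμ))
    (fun μ hμ => hqmax.2 (spectrum_map_ofReal_subset Q hμ))
    (fun μ hμ => hbmin.2 (spectrum_map_ofReal_subset _ (hBBc ▸ hμ))) (hJc ▸ hlam)
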